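/- arXiv:math/0407498 — 3 statements merged into one kernel-verified Lean document; each statement's English description precedes it below -/
import Mathlib

section
/- Let λ be a regular uncountable cardinal. For every condition p ∈ Q¹_λ and every set A ⊆ λ there is a condition q ∈ Q¹_λ with p ≤_{Q¹_λ} q such that either (∀δ ∈ C^q \ γ^p)(A ∩ Z^q_δ ∈ d^q_δ) or (∀δ ∈ C^q \ γ^p)(A ∩ Z^q_δ ∉ d^q_δ). -/
open Set Ordinal Cardinal

noncomputable section

namespace Sh830

/-- `D` is a (proper) ultrafilter on the set `Z` of ordinals. -/
def IsUltraOn (Z : Set Ordinal) (D : Set (Set Ordinal)) : Prop :=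
  (∀ A ∈ D, A ⊆ Z) ∧ Z ∈ D ∧ ∅ ∉ D ∧
  (∀ A B : Set Ordinal, A ∈ D → A ⊆ B → B ⊆ Z → B ∈ D) ∧
  (∀ A B : Set Ordinal, A ∈ D → B ∈ D → A ∩ B ∈ D) ∧
  (∀ A : Set Ordinal, A ⊆ Z → A ∈ D ∨ Z \ A ∈ D)

/-- `D` is an ultrafilter on `λ`, where `λ` is identified with the set of ordinals `< λ`. -/
def IsUltrafilterOn (l : Ordinal) (D : Set (Set Ordinal)) : Prop :=
  IsUltraOn (Iio l) D

/-- `D` is uniform: every member of `D` has cardinality `λ`. -/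
def IsUniformOn (l : Ordinal) (D : Set (Set Ordinal)) : Prop :=
  ∀ A ∈ D, #A = #(Iio l)

/-- `C` is a club (closed and unbounded) subset of `λ`. -/
def IsClubIn (C : Set Ordinal) (l : Ordinal) : Prop :=
  C ⊆ Iio l ∧
  (∀ δ, δ < l → δ ≠ 0 → sSup (C ∩ Iio δ) = δ → δ ∈ C) ∧
  (∀ α, α < l → ∃ β ∈ C, α < β)

/-- The quotient `D/f = {A ⊆ λ : f⁻¹(A) ∈ D}`. -/
def quotUF (l : Ordinal) (D : Set (Set Ordinal)) (f : Ordinal → Ordinal) :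
    Set (Set Ordinal) :=
  {A | A ⊆ Iio l ∧ Iio l ∩ f ⁻¹' A ∈ D}

/-- The family `F_λ` of all non-decreasing functions `λ → λ` with unbounded range. -/
def Flam (l : Ordinal) : Set (Ordinal → Ordinal) :=
  {f | (∀ α, α < l → f α < l) ∧ (∀ α β, α ≤ β → β < l → f α ≤ f β) ∧
    (∀ γ, γ < l → ∃ α, α < l ∧ γ ≤ f α)}

/-- `D` is weakly reasonable: for every `f ∈ F_λ` there is a club `C` of `λ` with
`∪ {[δ, δ + f δ) : δ ∈ C} ∉ D`. -/
def WeaklyReasonable (l : Ordinal) (D : Set (Set Ordinal)) : Prop :=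
  ∀ f ∈ Flam l, ∃ C, IsClubIn C l ∧ (⋃ δ ∈ C, Ico δ (δ + f δ)) ∉ D

/-- The order type of a set of ordinals: the (unique) ordinal order-isomorphic to it. -/
def setOtp (S : Set Ordinal) : Ordinal :=
  sInf {o : Ordinal | Nonempty (Iio o ≃o S)}

/-- `min(β/E)`: the least element of the `E`-equivalence class of `β`. -/
def minClass (E : Ordinal → Ordinal → Prop) (β : Ordinal) : Ordinal :=
  sInf {γ | E γ β}

/-- The function `f_E` associated with an equivalence relation `E`:
`f_E α = otp {β < α : β = min(β/E) < min(α/E)}`. -/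
def fEquiv (E : Ordinal → Ordinal → Prop) (α : Ordinal) : Ordinal :=
  setOtp {β | β < α ∧ β = minClass E β ∧ minClass E β < minClass E α}

/-- The equivalence relation `E_C` associated with a club `C`:
`α E_C β` iff `(∀ γ ∈ C)(α < γ ↔ β < γ)`. -/
def clubRel (C : Set Ordinal) (α β : Ordinal) : Prop :=
  ∀ γ ∈ C, (α < γ ↔ β < γ)

/-- The quotient `D/C = D/E_C = D/f_{E_C}`. -/
def quotClub (l : Ordinal) (D : Set (Set Ordinal)) (C : Set Ordinal) :
    Set (Set Ordinal) :=
  quotUF l D (fEquiv (clubRel C))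

/-- A strategy for Odd in the game `⅁_D`: given `i < λ`, Even's moves `β_j = α_{2j}`
for `j ≤ i`, and Odd's previous moves `γ_j = α_{2j+1}` for `j < i`, it produces
Odd's move `γ_i = α_{2i+1}`. -/
def OddStr : Type 1 :=
  (i : Ordinal) → ((j : Ordinal) → j ≤ i → Ordinal) → ((j : Ordinal) → j < i → Ordinal) → Ordinal

/-- A legal position of the game just before Odd's `i`-th move. -/
def IsPosition (l i : Ordinal) (β γ : Ordinal → Ordinal) : Prop :=
  i < l ∧ (∀ j, j ≤ i → β j < l) ∧ (∀ j, j < i → β j < γ j ∧ γ j < l) ∧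
  (∀ j, j < i → γ j < β (j + 1)) ∧
  (∀ j, j ≤ i → Order.IsSuccLimit j → β j = sSup (γ '' Iio j))

/-- A complete legal play of the game of length `λ`: `β i` is `α_{2i}`
(Even's move) and `γ i` is `α_{2i+1}` (Odd's move). -/
def IsPlay (l : Ordinal) (β γ : Ordinal → Ordinal) : Prop :=
  (∀ i, i < l → β i < l ∧ γ i < l) ∧ (∀ i, i < l → β i < γ i) ∧
  (∀ i, i + 1 < l → γ i < β (i + 1)) ∧
  (∀ i, i < l → Order.IsSuccLimit i → β i = sSup (γ '' Iio i))

/-- `st` is a legal strategy for Odd: at every legal position it produces a legal move,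
i.e. an ordinal `α_{2i+1}` with `α_{2i} < α_{2i+1} < λ`. -/
def IsOddStrategy (l : Ordinal) (st : OddStr) : Prop :=
  ∀ i β γ, IsPosition l i β γ →
    β i < st i (fun j _ => β j) (fun j _ => γ j) ∧
    st i (fun j _ => β j) (fun j _ => γ j) < l

/-- The play `(β, γ)` follows the strategy `st` of Odd. -/
def FollowsOdd (l : Ordinal) (st : OddStr) (β γ : Ordinal → Ordinal) : Prop :=
  ∀ i, i < l → γ i = st i (fun j _ => β j) (fun j _ => γ j)

/-- `st` is winning for Odd in `⅁_D`: in every play following it, Even loses, i.e.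
`∪ {[α_{2i+1}, α_{2i+2}) : i < λ} ∉ D`. -/
def OddWinsWith (l : Ordinal) (D : Set (Set Ordinal)) (st : OddStr) : Prop :=
  ∀ β γ, IsPlay l β γ → FollowsOdd l st β γ →
    (⋃ i ∈ Iio l, Ico (γ i) (β (i + 1))) ∉ D

/-- The next element of `C` above `δ`, i.e. `min (C \ (δ+1))`. -/
def nxt (C : Set Ordinal) (δ : Ordinal) : Ordinal := sInf (C ∩ Ioi δ)

/-- A condition of the forcing notion `Q¹_λ`; here `Z^p_δ = [δ, nxt C δ)` and
`d δ` is the ultrafilter `d^p_δ` on `Z^p_δ`. -/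
structure Q1 (l : Ordinal) where
  γ : Ordinal
  C : Set Ordinal
  d : Ordinal → Set (Set Ordinal)
  γ_lt : γ < l
  club : IsClubIn C l
  lim : ∀ δ ∈ C, Order.IsSuccLimit δ
  ultra : ∀ δ ∈ C, IsUltraOn (Ico δ (nxt C δ)) (d δ)

/-- The order of `Q¹_λ`. -/
def Q1le (l : Ordinal) (p q : Q1 l) : Prop :=
  p.γ ≤ q.γ ∧ p.C ∩ Iio p.γ ⊆ q.C ∧ q.C ⊆ p.C ∧
  ∀ δ ∈ q.C, ∀ A ∈ q.d δ,
    ∃ ζ ∈ p.C ∩ Ico δ (nxt q.C δ), A ∩ Ico ζ (nxt p.C ζ) ∈ p.d ζ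

/-- A condition of the forcing notion `Q⁰_λ`; here `Z^p_δ = [δ, nxt C δ)` and
`d δ` is the ultrafilter `d^p_δ` on `Z^p_δ`. -/
structure Q0 (l : Ordinal) where
  C : Set Ordinal
  d : Ordinal → Set (Set Ordinal)
  club : IsClubIn C l
  lim : ∀ δ ∈ C, Order.IsSuccLimit δ
  ultra : ∀ δ ∈ C, IsUltraOn (Ico δ (nxt C δ)) (d δ)

/-- The order relation of `Q⁰_λ`, on the underlying data. -/
def Q0leAux (Cp : Set Ordinal) (dp : Ordinal → Set (Set Ordinal))
    (Cq : Set Ordinal) (dq : Ordinal → Set (Set Ordinal)) : Prop :=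
  Cq ⊆ Cp ∧ ∀ δ ∈ Cq, ∀ A ∈ dq δ,
    ∃ ζ ∈ Cp ∩ Ico δ (nxt Cq δ), A ∩ Ico ζ (nxt Cp ζ) ∈ dp ζ

/-- The order `≤_{Q⁰_λ}`. -/
def Q0le (l : Ordinal) (p q : Q0 l) : Prop := Q0leAux p.C p.d q.C q.d

/-- The relation `≤*_{Q⁰_λ}`: for some `α < λ` the restrictions beyond `α` are
`≤_{Q⁰_λ}`-related. -/
def Q0leStar (l : Ordinal) (p q : Q0 l) : Prop :=
  ∃ α, α < l ∧ Q0leAux (p.C \ Iio α) p.d (q.C \ Iio α) q.d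

/-- `fil(p) = {A ⊆ λ : (∃ ε < λ)(∀ δ ∈ C^p \ ε)(A ∩ Z^p_δ ∈ d^p_δ)}`. -/
def fil (l : Ordinal) (p : Q0 l) : Set (Set Ordinal) :=
  {A | A ⊆ Iio l ∧ ∃ ε, ε < l ∧ ∀ δ ∈ p.C, ε ≤ δ → A ∩ Ico δ (nxt p.C δ) ∈ p.d δ}

/-- `fil(G*) = ∪ {fil(p) : p ∈ G*}`. -/
def filG (l : Ordinal) (G : Set (Q0 l)) : Set (Set Ordinal) := ⋃ p ∈ G, fil l p

/-- The relation `≤⁰`: `p ≤⁰ q` iff `fil(p) ⊆ fil(q)`. -/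
def le0 (l : Ordinal) (p q : Q0 l) : Prop := fil l p ⊆ fil l q

/-- `G` is `(<c)`-directed with respect to `le`: `G` is nonempty and every subset of `G`
of cardinality `< c` has an upper bound in `G`. -/
def DirLtOn (l : Ordinal) (c : Cardinal.{1}) (G : Set (Q0 l))
    (le : Q0 l → Q0 l → Prop) : Prop :=
  G.Nonempty ∧ ∀ S : Set (Q0 l), S ⊆ G → #S < c → ∃ r ∈ G, ∀ p ∈ S, le p r

/-- The sum `⊕^e {d_x : x ∈ X}` of ultrafilters `d x` on `Z x` along an ultrafilter `e`
on `X`. -/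
def ufSum (X : Set Ordinal) (e : Set (Set Ordinal)) (Z : Ordinal → Set Ordinal)
    (d : Ordinal → Set (Set Ordinal)) : Set (Set Ordinal) :=
  {A | A ⊆ (⋃ x ∈ X, Z x) ∧ {x | x ∈ X ∧ Z x ∩ A ∈ d x} ∈ e}

/-- The function `f_p` associated with `p ∈ Q⁰_λ`: `f_p α` is the member of `C^p` with
`otp (C^p ∩ f_p α) = ω·α + ω`. -/
def fP (l : Ordinal) (p : Q0 l) (α : Ordinal) : Ordinal :=
  sInf {β | β ∈ p.C ∧ setOtp (p.C ∩ Iio β) = Ordinal.omega0 * α + Ordinal.omega0}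

/-- The space `^λλ` (functions below `l` matter). -/
def funSp (l : Ordinal) : Set (Ordinal → Ordinal) := {f | ∀ α, α < l → f α < l}

/-- `F` is a dominating family in `^λλ`. -/
def IsDominating (l : Ordinal) (F : Set (Ordinal → Ordinal)) : Prop :=
  ∀ g ∈ funSp l, ∃ f ∈ F, ∃ α, α < l ∧ ∀ β, α < β → β < l → g β < f β

/-- The dominating number `𝔡_λ`. -/
def dLam (l : Ordinal) : Cardinal.{1} :=
  sInf {c : Cardinal | ∃ F : Set (Ordinal → Ordinal),
    F ⊆ funSp l ∧ IsDominating l F ∧ #F = c}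

/-- `S` is non-stationary in `λ`. -/
def NonStatIn (S : Set Ordinal) (l : Ordinal) : Prop :=
  ∃ C, IsClubIn C l ∧ S ∩ C = ∅

/-- `F` is a club-dominating family in `^λλ`. -/
def IsClubDominating (l : Ordinal) (F : Set (Ordinal → Ordinal)) : Prop :=
  ∀ g ∈ funSp l, ∃ f ∈ F, NonStatIn {β | β < l ∧ f β ≤ g β} l

/-- The club-dominating number `𝔡_{cl(λ)}`. -/
def dClubLam (l : Ordinal) : Cardinal.{1} :=
  sInf {c : Cardinal | ∃ F : Set (Ordinal → Ordinal),
    F ⊆ funSp l ∧ IsClubDominating l F ∧ #F = c}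

/-- `A` is a nowhere dense subset of the space `^λλ` (with basic open sets determined
by initial segments). -/
def IsNwd (l : Ordinal) (A : Set (Ordinal → Ordinal)) : Prop :=
  A ⊆ funSp l ∧
  ∀ s ∈ funSp l, ∀ α, α < l → ∃ t ∈ funSp l, ∃ α', α ≤ α' ∧ α' < l ∧
    (∀ β, β < α → t β = s β) ∧ ∀ f ∈ funSp l, (∀ β, β < α' → f β = t β) → f ∉ A

/-- `A` belongs to the ideal `M^λ_{λ,λ}`, the `(<λ)`-complete ideal generated by the
nowhere dense subsets of `^λλ`. -/
def InMIdeal (l : Ordinal) (A : Set (Ordinal → Ordinal)) : Prop :=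
  A ⊆ funSp l ∧ ∃ θ, θ < l ∧ ∃ B : Ordinal → Set (Ordinal → Ordinal),
    (∀ i, i < θ → IsNwd l (B i)) ∧ A ⊆ ⋃ i ∈ Iio θ, B i

/-- The covering number `cov(M^λ_{λ,λ})`. -/
def covM (l : Ordinal) : Cardinal.{1} :=
  sInf {c : Cardinal | ∃ S : Set (Set (Ordinal → Ordinal)),
    (∀ A ∈ S, InMIdeal l A) ∧ funSp l ⊆ ⋃₀ S ∧ #S = c}

/-! Let `T⁺ = {ζ ∈ C^p : A ∩ Z^p_ζ ∈ d^p_ζ}` and `T⁻ = C^p \ T⁺`; as `C^p` is unbounded, one of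
them, `T`, is unbounded in `λ`. Keep `C^p` up to `γ* = min (C^p \ γ^p)` and continue with the
accumulation points of `T` above `γ*`, a club since `cf λ > ω`. For `δ ≥ γ^p` in the new club,
`Z^q_δ` then ends at an accumulation point of `T`, so it contains `Z^p_ζ` for some `ζ ∈ T`; taking
`d^q_δ` to be the ultrafilter generated by `d^p_ζ` makes `A ∩ Z^q_δ ∈ d^q_δ` equivalent to
`ζ ∈ T⁺`. -/

def IsUnboundedIn (T : Set Ordinal) (l : Ordinal) : Prop :=
  ∀ α, α < l → ∃ ζ ∈ T, α < ζ

def accPts (T : Set Ordinal) (l : Ordinal) : Set Ordinal :=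
  {δ | δ < l ∧ δ ≠ 0 ∧ ∀ α < δ, ∃ x ∈ T, α < x ∧ x < δ}

section Clubs

variable {C D T : Set Ordinal} {l δ : Ordinal}

theorem IsUnboundedIn.sep_or_sep_not (hC : IsUnboundedIn C l) (P : Ordinal → Prop) :
    IsUnboundedIn {ζ ∈ C | P ζ} l ∨ IsUnboundedIn {ζ ∈ C | ¬ P ζ} l := by
  refine or_iff_not_imp_left.2 fun h β hβ => ?_
  unfold IsUnboundedIn at h
  push Not at h
  obtain ⟨α, hα, hbound⟩ := h
  obtain ⟨ζ, hζ, hlt⟩ := hC (max β α) (max_lt hβ hα)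
  refine ⟨ζ, ⟨hζ, fun hP => ?_⟩, (le_max_left _ _).trans_lt hlt⟩
  exact (hbound ζ ⟨hζ, hP⟩).not_gt ((le_max_right _ _).trans_lt hlt)

theorem IsUnboundedIn.nxt_mem (hC : IsUnboundedIn C l) (hδ : δ < l) : nxt C δ ∈ C ∩ Ioi δ :=
  csInf_mem (hC δ hδ)

theorem nxt_le_of_mem {x : Ordinal} (hx : x ∈ C) (hδx : δ < x) : nxt C δ ≤ x :=
  csInf_le' ⟨hx, hδx⟩

theorem Ico_nxt_subset_Ico_nxt {C' : Set Ordinal} {z : Ordinal} (hC : IsUnboundedIn C l)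
    (hCC' : C ⊆ C') (hδ : δ < l) (hδz : δ ≤ z) (hz : z < nxt C δ) :
    Ico z (nxt C' z) ⊆ Ico δ (nxt C δ) :=
  Ico_subset_Ico hδz (nxt_le_of_mem (hCC' (hC.nxt_mem hδ).1) hz)

theorem sSup_inter_Iio_eq_iff {S : Set Ordinal} :
    sSup (S ∩ Iio δ) = δ ↔ ∀ α < δ, ∃ x ∈ S, α < x ∧ x < δ := by
  constructor
  · intro h α hα
    rw [← h] at hα
    obtain ⟨x, ⟨hxS, hxδ⟩, hαx⟩ := exists_lt_of_lt_csSup' hα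
    exact ⟨x, hxS, hαx, hxδ⟩
  · intro h
    refine le_antisymm (csSup_le' fun x hx => hx.2.le) (le_of_forall_lt fun α hα => ?_)
    obtain ⟨x, hxS, hαx, hxδ⟩ := h α hα
    exact hαx.trans_le (le_csSup ⟨δ, fun y hy => hy.2.le⟩ ⟨hxS, hxδ⟩)

theorem isClubIn_iff : IsClubIn C l ↔ C ⊆ Iio l ∧ accPts C l ⊆ C ∧ IsUnboundedIn C l := by
  simp only [IsClubIn, accPts, IsUnboundedIn, sSup_inter_Iio_eq_iff, ofPred_subset, and_imp]

theorem accPts_mono (h : T ⊆ C) : accPts T l ⊆ accPts C l := by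
  rintro δ ⟨hδ, h0, hT⟩
  refine ⟨hδ, h0, fun α hα => ?_⟩
  obtain ⟨x, hx, hαx, hxδ⟩ := hT α hα
  exact ⟨x, h hx, hαx, hxδ⟩

theorem accPts_accPts_subset : accPts (accPts T l) l ⊆ accPts T l := by
  rintro δ ⟨hδ, h0, hacc⟩
  refine ⟨hδ, h0, fun α hα => ?_⟩
  obtain ⟨x, ⟨-, -, hx⟩, hαx, hxδ⟩ := hacc α hα
  obtain ⟨y, hy, hαy, hyx⟩ := hx α hαx
  exact ⟨y, hy, hαy, hyx.trans hxδ⟩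

theorem IsClubIn.accPts_subset (hC : IsClubIn C l) (hT : T ⊆ C) : accPts T l ⊆ C :=
  (accPts_mono hT).trans (isClubIn_iff.1 hC).2.1

theorem IsUnboundedIn.accPts (hl : ℵ₀ < l.cof) (hTl : T ⊆ Iio l) (hT : IsUnboundedIn T l) :
    IsUnboundedIn (accPts T l) l := by
  intro α hα
  choose! g hgT hg using hT
  set s : ℕ → Ordinal := fun n => g^[n] α
  have hs_succ : ∀ n, s (n + 1) = g (s n) := fun n => Function.iterate_succ_apply' g n α
  have hs : ∀ n, s n < l ∧ s n < s (n + 1) ∧ s (n + 1) ∈ T := by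
    intro n
    induction n with
    | zero => exact ⟨hα, hg α hα, hgT α hα⟩
    | succ n ih =>
      have hl' : s (n + 1) < l := hTl ih.2.2
      rw [hs_succ (n + 1)]
      exact ⟨hl', hg _ hl', hgT _ hl'⟩
  have hsup : (⨆ n, s n) < l :=
    Ordinal.lift_iSup_lt_of_lt_cof (by simpa using hl) fun n => (hs n).1
  have hle : ∀ n, s n ≤ ⨆ n, s n := Ordinal.le_iSup s
  have hαsup : α < ⨆ n, s n := (hs 0).2.1.trans_le (hle 1)
  refine ⟨⨆ n, s n, ⟨hsup, (pos_of_gt hαsup).ne', fun β hβ => ?_⟩, hαsup⟩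
  obtain ⟨n, hn⟩ := Ordinal.lt_iSup_iff.1 hβ
  exact ⟨s (n + 1), (hs n).2.2, hn.trans (hs n).2.1, (hs (n + 1)).2.1.trans_le (hle _)⟩

theorem isClubIn_accPts (hl : ℵ₀ < l.cof) (hTl : T ⊆ Iio l) (hT : IsUnboundedIn T l) :
    IsClubIn (accPts T l) l :=
  isClubIn_iff.2 ⟨fun _ h => h.1, accPts_accPts_subset, hT.accPts hl hTl⟩

theorem IsClubIn.union_Ioi (hC : IsClubIn C l) (hD : IsClubIn D l) (β : Ordinal) :
    IsClubIn (C ∩ Iic β ∪ D ∩ Ioi β) l := by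
  rw [isClubIn_iff] at hC hD ⊢
  refine ⟨union_subset (inter_subset_left.trans hC.1) (inter_subset_left.trans hD.1),
    fun δ hδ => ?_, fun α hα => ?_⟩
  · obtain ⟨hδl, h0, hacc⟩ := hδ
    rcases le_or_gt δ β with hδβ | hβδ
    · refine Or.inl ⟨hC.2.1 ⟨hδl, h0, fun α hα => ?_⟩, hδβ⟩
      obtain ⟨x, hx, hαx, hxδ⟩ := hacc α hα
      exact ⟨x, hx.elim (fun h => h.1) fun h => absurd (hxδ.trans_le hδβ) h.2.not_gt, hαx, hxδ⟩
    · refine Or.inr ⟨hD.2.1 ⟨hδl, h0, fun α hα => ?_⟩, hβδ⟩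
      obtain ⟨x, hx, hαx, hxδ⟩ := hacc (max α β) (max_lt hα hβδ)
      have hβx : β < x := (le_max_right _ _).trans_lt hαx
      exact ⟨x, hx.elim (fun h => absurd h.2 hβx.not_ge) (fun h => h.1),
        (le_max_left _ _).trans_lt hαx, hxδ⟩
  · rcases lt_or_ge β l with hβ | hlβ
    · obtain ⟨x, hx, hαx⟩ := hD.2.2 (max α β) (max_lt hα hβ)
      exact ⟨x, Or.inr ⟨hx, (le_max_right _ _).trans_lt hαx⟩, (le_max_left _ _).trans_lt hαx⟩
    · obtain ⟨x, hx, hαx⟩ := hC.2.2 α hα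
      exact ⟨x, Or.inl ⟨hx, (hC.1 hx).le.trans hlβ⟩, hαx⟩

end Clubs

theorem IsUltraOn.extend {Z W : Set Ordinal} {d : Set (Set Ordinal)} (h : IsUltraOn Z d)
    (hZW : Z ⊆ W) : IsUltraOn W {B | B ⊆ W ∧ B ∩ Z ∈ d} := by
  obtain ⟨-, hZ, hempty, hmono, hinter, hcompl⟩ := h
  refine ⟨fun B hB => hB.1, ⟨Subset.rfl, by rwa [inter_eq_self_of_subset_right hZW]⟩,
    fun hB => hempty (by simpa using hB.2), ?_, ?_, ?_⟩
  · rintro B B' ⟨-, hBZ⟩ hBB' hB'W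
    exact ⟨hB'W, hmono _ _ hBZ (inter_subset_inter_left _ hBB') inter_subset_right⟩
  · rintro B B' ⟨hBW, hBZ⟩ ⟨-, hB'Z⟩
    refine ⟨inter_subset_left.trans hBW, ?_⟩
    rw [inter_inter_distrib_right]
    exact hinter _ _ hBZ hB'Z
  · intro B hBW
    refine (hcompl (B ∩ Z) inter_subset_right).imp (fun h => ⟨hBW, h⟩)
      fun h => ⟨sdiff_subset, ?_⟩
    convert h using 1
    ext x
    simp only [mem_inter_iff, mem_sdiff]
    exact ⟨fun ⟨⟨_, hB⟩, hZ⟩ => ⟨hZ, fun h => hB h.1⟩,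
      fun ⟨hZ, hB⟩ => ⟨⟨hZW hZ, fun h => hB ⟨h, hZ⟩⟩, hZ⟩⟩

section Shrink

variable {l : Ordinal} (p : Q1 l) {C : Set Ordinal} {ζ : Ordinal → Ordinal}

def Q1.shrink (hC : IsClubIn C l) (hCp : C ⊆ p.C)
    (hζ : ∀ δ ∈ C, ζ δ ∈ p.C ∧ δ ≤ ζ δ ∧ ζ δ < nxt C δ) : Q1 l where
  γ := p.γ
  C := C
  d δ := {B | B ⊆ Ico δ (nxt C δ) ∧ B ∩ Ico (ζ δ) (nxt p.C (ζ δ)) ∈ p.d (ζ δ)}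
  γ_lt := p.γ_lt
  club := hC
  lim δ hδ := p.lim δ (hCp hδ)
  ultra δ hδ := (p.ultra _ (hζ δ hδ).1).extend
    (Ico_nxt_subset_Ico_nxt hC.2.2 hCp (hC.1 hδ) (hζ δ hδ).2.1 (hζ δ hδ).2.2)

variable (hC : IsClubIn C l) (hCp : C ⊆ p.C)
  (hζ : ∀ δ ∈ C, ζ δ ∈ p.C ∧ δ ≤ ζ δ ∧ ζ δ < nxt C δ)

theorem Q1le_shrink (hγ : p.C ∩ Iio p.γ ⊆ C) : Q1le l p (p.shrink hC hCp hζ) :=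
  ⟨le_rfl, hγ, hCp, fun δ hδ _ hB => ⟨ζ δ, ⟨(hζ δ hδ).1, (hζ δ hδ).2.1, (hζ δ hδ).2.2⟩, hB.2⟩⟩

theorem inter_Ico_mem_shrink_d_iff {δ : Ordinal} (hδ : δ ∈ C) (A : Set Ordinal) :
    A ∩ Ico δ (nxt C δ) ∈ (p.shrink hC hCp hζ).d δ ↔
      A ∩ Ico (ζ δ) (nxt p.C (ζ δ)) ∈ p.d (ζ δ) := by
  change _ ∧ _ ↔ _
  rw [inter_assoc, inter_eq_self_of_subset_right
    (Ico_nxt_subset_Ico_nxt hC.2.2 hCp (hC.1 hδ) (hζ δ hδ).2.1 (hζ δ hδ).2.2)]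
  exact and_iff_right inter_subset_right

end Shrink

theorem Q1.exists_le_forall_mem_d_iff {l : Ordinal} (hl : ℵ₀ < l.cof) (p : Q1 l)
    {T : Set Ordinal} (hTC : T ⊆ p.C) (hT : IsUnboundedIn T l) :
    ∃ q : Q1 l, Q1le l p q ∧ ∀ δ ∈ q.C, p.γ ≤ δ → ∃ ζ ∈ T, ∀ A : Set Ordinal,
      A ∩ Ico δ (nxt q.C δ) ∈ q.d δ ↔ A ∩ Ico ζ (nxt p.C ζ) ∈ p.d ζ := by
  have hpC := isClubIn_iff.1 p.club
  set γ' := sInf (p.C ∩ Ici p.γ)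
  have hγ' : γ' ∈ p.C ∩ Ici p.γ :=
    csInf_mem ((hpC.2.2 p.γ p.γ_lt).imp fun _ h => ⟨h.1, h.2.le⟩)
  set C := p.C ∩ Iic γ' ∪ accPts T l ∩ Ioi γ'
  have hC : IsClubIn C l := p.club.union_Ioi (isClubIn_accPts hl (hTC.trans hpC.1) hT) γ'
  have hCp : C ⊆ p.C :=
    union_subset inter_subset_left (inter_subset_left.trans (p.club.accPts_subset hTC))
  have hT_between : ∀ δ ∈ C, p.γ ≤ δ → ∃ x ∈ T, δ ≤ x ∧ x < nxt C δ := by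
    intro δ hδ hγδ
    have hγ'δ : γ' ≤ δ := hδ.elim (fun h => csInf_le' ⟨h.1, hγδ⟩) fun h => h.2.le
    obtain ⟨hnC, hδn⟩ := IsUnboundedIn.nxt_mem hC.2.2 (hC.1 hδ)
    have hnacc : nxt C δ ∈ accPts T l :=
      hnC.elim (fun h => absurd (h.2.trans hγ'δ) hδn.not_ge) fun h => h.1
    obtain ⟨x, hxT, hδx, hxn⟩ := hnacc.2.2 δ hδn
    exact ⟨x, hxT, hδx.le, hxn⟩
  have hsel : ∀ δ ∈ C, ∃ ζ, (ζ ∈ p.C ∧ δ ≤ ζ ∧ ζ < nxt C δ) ∧ (p.γ ≤ δ → ζ ∈ T) := by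
    intro δ hδ
    by_cases hγδ : p.γ ≤ δ
    · obtain ⟨x, hxT, hδx, hxn⟩ := hT_between δ hδ hγδ
      exact ⟨x, ⟨hTC hxT, hδx, hxn⟩, fun _ => hxT⟩
    · exact ⟨δ, ⟨hCp hδ, le_rfl, (IsUnboundedIn.nxt_mem hC.2.2 (hC.1 hδ)).2⟩,
        fun h => absurd h hγδ⟩
  choose! ζ hζ using hsel
  have hCγ : p.C ∩ Iio p.γ ⊆ C := fun x hx => Or.inl ⟨hx.1, mem_Iic.2 (hx.2.trans_le hγ'.2).le⟩
  exact ⟨p.shrink hC hCp fun δ hδ => (hζ δ hδ).1, Q1le_shrink p hC hCp _ hCγ,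
    fun δ hδ hγδ => ⟨ζ δ, (hζ δ hδ).2 hγδ, inter_Ico_mem_shrink_d_iff p hC hCp _ hδ⟩⟩

theorem stmt9_general (κ : Cardinal) (hreg : κ.IsRegular) (hunc : ℵ₀ < κ)
    (p : Q1 κ.ord) (A : Set Ordinal) :
    ∃ q : Q1 κ.ord, Q1le κ.ord p q ∧
      ((∀ δ ∈ q.C, p.γ ≤ δ → A ∩ Ico δ (nxt q.C δ) ∈ q.d δ) ∨
       (∀ δ ∈ q.C, p.γ ≤ δ → A ∩ Ico δ (nxt q.C δ) ∉ q.d δ)) := by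
  have hl : ℵ₀ < κ.ord.cof := by rwa [hreg.cof_ord]
  rcases IsUnboundedIn.sep_or_sep_not p.club.2.2 fun ζ => A ∩ Ico ζ (nxt p.C ζ) ∈ p.d ζ
    with hT | hT <;>
  obtain ⟨q, hpq, hq⟩ := p.exists_le_forall_mem_d_iff hl (sep_subset _ _) hT <;>
  refine ⟨q, hpq, ?_⟩
  · exact Or.inl fun δ hδ hγδ => let ⟨_, hζ, hiff⟩ := hq δ hδ hγδ; (hiff A).2 hζ.2
  · exact Or.inr fun δ hδ hγδ => let ⟨_, hζ, hiff⟩ := hq δ hδ hγδ; mt (hiff A).1 hζ.2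

/-- Proposition 1.2(4): for every `p ∈ Q¹_λ` and `A ⊆ λ` there is `q ≥ p` deciding `A`:
either `A ∩ Z^q_δ ∈ d^q_δ` for all `δ ∈ C^q \ γ^p`, or `A ∩ Z^q_δ ∉ d^q_δ` for all
such `δ`. -/
theorem stmt9 (κ : Cardinal) (hreg : κ.IsRegular) (hunc : ℵ₀ < κ)
    (p : Q1 κ.ord) (A : Set Ordinal) (hA : A ⊆ Iio κ.ord) :
    ∃ q : Q1 κ.ord, Q1le κ.ord p q ∧
      ((∀ δ ∈ q.C, p.γ ≤ δ → A ∩ Ico δ (nxt q.C δ) ∈ q.d δ) ∨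
       (∀ δ ∈ q.C, p.γ ≤ δ → A ∩ Ico δ (nxt q.C δ) ∉ q.d δ)) :=
  stmt9_general κ hreg hunc p A

end Sh830

end
end

section
/- Let λ be a regular uncountable cardinal and p, q ∈ Q⁰_λ. The following are equivalent: (a) p ≤⁰ q (i.e., fil(p) ⊆ fil(q)); (b) there is ε < λ such that for every α ∈ C^q \ ε and every A ∈ d^q_α there is β ∈ C^p with A ∩ Z^p_β ∈ d^p_β; (c) there is ε < λ such that for every α ∈ C^q \ ε, letting β₀ = sup(C^p ∩ (α+1)) and β₁ = min(C^p \ min(C^q \ (α+1))), there is an ultrafilter e on [β₀, β₁) ∩ C^p with d^q_α = {A ∩ Z^q_α : A ∈ ⊕^e{d^p_β : β ∈ [β₀, β₁) ∩ C^p}}. -/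
open Set Ordinal Cardinal

noncomputable section

namespace Sh830

/-!
Write `π ξ` for the `C^p`-block containing `ξ`. If every member of `d^q_α` lies in some `d^p_β`,
then the members of `d^q_α` are exactly the traces on `Z^q_α` of the sum of the `d^p_β` along the
image `e = π(d^q_α)`; conversely, every member of such a sum lies in some `d^p_β`.
This is (b) ⇔ (c).

(b) ⇒ (a): if `A ∈ fil(p)` were not in `d^q_α` for a large `α`, then `Z^q_α \ A` would lie in some
`d^p_β` with `β` so large that `A` belongs to `d^p_β`.

(a) ⇒ (b): if (b) fails, it fails for cofinally many `α`. Taking these at closure points of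
`α ↦ min (C^p \ min (C^q \ (α + 1)))`, which are cofinal as `λ` is regular and uncountable, gives a
cofinal set `S` such that a point of `C^p` separates any two blocks `Z^q_α`, `α ∈ S`. Removing from
`λ` a witness of failure from every `d^q_α`, `α ∈ S`, leaves a set which is in `fil(p)`, as every
`Z^p_β` loses at most one witness, but not in `fil(q)`.
-/

universe u

section

variable {Z W X : Set Ordinal.{u}} {D S e : Set (Set Ordinal.{u})} {A B : Set Ordinal.{u}}

namespace IsUltraOn

theorem subset_of_mem (hD : IsUltraOn Z D) (hA : A ∈ D) : A ⊆ Z := hD.1 A hA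

theorem self_mem (hD : IsUltraOn Z D) : Z ∈ D := hD.2.1

theorem empty_notMem (hD : IsUltraOn Z D) : ∅ ∉ D := hD.2.2.1

theorem mem_of_superset (hD : IsUltraOn Z D) (hA : A ∈ D) (hAB : A ⊆ B) (hB : B ⊆ Z) : B ∈ D :=
  hD.2.2.2.1 A B hA hAB hB

theorem inter_mem (hD : IsUltraOn Z D) (hA : A ∈ D) (hB : B ∈ D) : A ∩ B ∈ D :=
  hD.2.2.2.2.1 A B hA hB

theorem mem_or_diff_mem (hD : IsUltraOn Z D) (hA : A ⊆ Z) : A ∈ D ∨ Z \ A ∈ D :=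
  hD.2.2.2.2.2 A hA

theorem nonempty_of_mem (hD : IsUltraOn Z D) (hA : A ∈ D) : A.Nonempty :=
  nonempty_iff_ne_empty.2 fun h => hD.empty_notMem (h ▸ hA)

theorem inter_nonempty (hD : IsUltraOn Z D) (hA : A ∈ D) (hB : B ∈ D) : (A ∩ B).Nonempty :=
  hD.nonempty_of_mem (hD.inter_mem hA hB)

theorem inter_mem_or_diff_mem (hD : IsUltraOn Z D) (A : Set Ordinal) :
    A ∩ Z ∈ D ∨ Z \ A ∈ D := by
  simpa only [sdiff_inter_self_eq_sdiff] using hD.mem_or_diff_mem (inter_subset_right (s := A))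

theorem inter_mem_of_subset (hD : IsUltraOn Z D) (hA : A ∩ Z ∈ D) (hAB : A ⊆ B) : B ∩ Z ∈ D :=
  hD.mem_of_superset hA (inter_subset_inter_left Z hAB) inter_subset_right

theorem map {f : Ordinal.{u} → Ordinal.{u}} (hD : IsUltraOn Z D)
    (hf : MapsTo f Z X) : IsUltraOn X {Y | Y ⊆ X ∧ f ⁻¹' Y ∩ Z ∈ D} := by
  refine ⟨fun Y hY => hY.1, ⟨Subset.rfl, ?_⟩, fun h => ?_, ?_, ?_, fun Y hY => ?_⟩
  · rw [(inter_eq_right (s := f ⁻¹' X)).2 hf]; exact hD.self_mem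
  · exact hD.empty_notMem (by simpa using h.2)
  · rintro Y₁ Y₂ ⟨-, h₁⟩ h₁₂ h₂
    exact ⟨h₂, hD.inter_mem_of_subset h₁ (preimage_mono h₁₂)⟩
  · rintro Y₁ Y₂ ⟨hY₁, h₁⟩ ⟨-, h₂⟩
    refine ⟨inter_subset_left.trans hY₁, hD.mem_of_superset (hD.inter_mem h₁ h₂) ?_
      inter_subset_right⟩
    exact fun ξ hξ => ⟨⟨hξ.1.1, hξ.2.1⟩, hξ.1.2⟩
  · refine (hD.inter_mem_or_diff_mem (f ⁻¹' Y)).imp (fun h => ⟨hY, h⟩) fun h => ⟨sdiff_subset, ?_⟩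
    exact hD.mem_of_superset h (fun ξ hξ => ⟨⟨hf hξ.1, hξ.2⟩, hξ.1⟩) inter_subset_right

theorem eq_trace_iff_subset (hS : IsUltraOn W S) (hD : IsUltraOn Z D) (hZW : Z ⊆ W) :
    D = {B | ∃ A ∈ S, B = A ∩ Z} ↔ D ⊆ S := by
  refine ⟨fun h B hB => ?_, fun h => Subset.antisymm (fun B hB => ⟨B, h hB, ?_⟩) ?_⟩
  · obtain ⟨A, hA, rfl⟩ := h ▸ hB
    rcases hS.inter_mem_or_diff_mem (A ∩ Z) with h' | hc
    · rwa [inter_assoc, inter_eq_left.2 hZW] at h'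
    · have hc' : (W \ (A ∩ Z)) ∩ Z ∈ D := h ▸ ⟨_, hc, rfl⟩
      obtain ⟨ξ, hξ, hξ'⟩ := hD.inter_nonempty hB hc'
      exact absurd hξ hξ'.1.2
  · exact (inter_eq_left.2 (hD.subset_of_mem hB)).symm
  · rintro B ⟨A, hA, rfl⟩
    refine (hD.inter_mem_or_diff_mem A).resolve_right fun hc => hS.empty_notMem ?_
    simpa using hS.inter_mem hA (h hc)

end IsUltraOn

theorem isUltraOn_ufSum {Zx : Ordinal.{u} → Set Ordinal.{u}}
    {d : Ordinal.{u} → Set (Set Ordinal.{u})}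
    (he : IsUltraOn X e) (hd : ∀ x ∈ X, IsUltraOn (Zx x) (d x)) :
    IsUltraOn (⋃ x ∈ X, Zx x) (ufSum X e Zx d) := by
  have hmono : ∀ {A B : Set Ordinal}, A ⊆ B →
      {x | x ∈ X ∧ Zx x ∩ A ∈ d x} ⊆ {x | x ∈ X ∧ Zx x ∩ B ∈ d x} :=
    fun hAB x ⟨hx, hA⟩ => ⟨hx, (hd x hx).mem_of_superset hA (inter_subset_inter_right _ hAB)
      inter_subset_left⟩
  refine ⟨fun A hA => hA.1, ⟨Subset.rfl, ?_⟩, fun h => ?_, ?_, ?_, fun A hA => ?_⟩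
  · refine he.mem_of_superset he.self_mem (fun x hx => ⟨hx, ?_⟩) fun x hx => hx.1
    rw [inter_eq_left.2 (subset_biUnion_of_mem hx)]
    exact (hd x hx).self_mem
  · obtain ⟨x, hx, h0⟩ := he.nonempty_of_mem h.2
    exact (hd x hx).empty_notMem (by simpa using h0)
  · rintro A B ⟨-, hA⟩ hAB hB
    exact ⟨hB, he.mem_of_superset hA (hmono hAB) fun x hx => hx.1⟩
  · rintro A B ⟨hAU, hA⟩ ⟨-, hB⟩
    refine ⟨inter_subset_left.trans hAU, he.mem_of_superset (he.inter_mem hA hB) ?_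
      fun x hx => hx.1⟩
    rintro x ⟨⟨hx, hxA⟩, -, hxB⟩
    refine ⟨hx, (hd x hx).mem_of_superset ((hd x hx).inter_mem hxA hxB) ?_ inter_subset_left⟩
    exact fun ξ hξ => ⟨hξ.1.1, hξ.1.2, hξ.2.2⟩
  · refine (he.mem_or_diff_mem fun x hx => hx.1).imp (fun h => ⟨hA, h⟩) fun h => ⟨sdiff_subset, ?_⟩
    refine he.mem_of_superset h (fun x ⟨hx, hxA⟩ => ⟨hx, ?_⟩) fun x hx => hx.1
    rcases (hd x hx).inter_mem_or_diff_mem A with hA' | hA'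
    · exact absurd ⟨hx, by rwa [inter_comm]⟩ hxA
    · refine (hd x hx).mem_of_superset hA' ?_ inter_subset_left
      exact fun ξ hξ => ⟨hξ.1, mem_biUnion hx hξ.1, hξ.2⟩

theorem exists_of_mem_ufSum {Zx : Ordinal.{u} → Set Ordinal.{u}}
    {d : Ordinal.{u} → Set (Set Ordinal.{u})} (he : IsUltraOn X e) (hA : A ∈ ufSum X e Zx d) :
    ∃ x ∈ X, Zx x ∩ A ∈ d x :=
  he.nonempty_of_mem hA.2

end

section

variable {l : Ordinal.{u}} {C : Set Ordinal.{u}}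

theorem nxt_mem_lt (hC : IsClubIn C l) {δ : Ordinal} (hδ : δ < l) : nxt C δ ∈ C ∧ δ < nxt C δ :=
  csInf_mem (hC.2.2 δ hδ)

theorem nxt_lt (hC : IsClubIn C l) {δ : Ordinal} (hδ : δ < l) : nxt C δ < l :=
  hC.1 (nxt_mem_lt hC hδ).1

theorem nxt_le {δ γ : Ordinal} (hγ : γ ∈ C) (h : δ < γ) : nxt C δ ≤ γ :=
  csInf_le' ⟨hγ, h⟩

theorem sInf_Ici_mem_le (hC : IsClubIn C l) {x : Ordinal} (hx : x < l) :
    sInf (C ∩ Ici x) ∈ C ∧ x ≤ sInf (C ∩ Ici x) := by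
  obtain ⟨β, hβ, hxβ⟩ := hC.2.2 x hx
  exact csInf_mem (⟨β, hβ, hxβ.le⟩ : (C ∩ Ici x).Nonempty)

theorem le_of_mem_Ico_nxt {β γ ξ : Ordinal} (hγ : γ ∈ C) (hξ : ξ ∈ Ico β (nxt C β))
    (hγξ : γ ≤ ξ) : γ ≤ β :=
  not_lt.1 fun h => (hξ.2.trans_le ((nxt_le hγ h).trans hγξ)).false

theorem eq_of_mem_Ico_nxt {β β' ξ : Ordinal} (hβ : β ∈ C) (hβ' : β' ∈ C)
    (h : ξ ∈ Ico β (nxt C β)) (h' : ξ ∈ Ico β' (nxt C β')) : β = β' :=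
  le_antisymm (le_of_mem_Ico_nxt hβ h' h.1) (le_of_mem_Ico_nxt hβ' h h'.1)

theorem sSup_inter_Iic_mem (hC : IsClubIn C l) {γ α : Ordinal} (hγ : γ ∈ C) (hγα : γ ≤ α)
    (hα : α < l) : sSup (C ∩ Iic α) ∈ C := by
  set s := sSup (C ∩ Iic α)
  have hbdd : BddAbove (C ∩ Iic α) := ⟨α, fun x hx => hx.2⟩
  by_contra hs
  have hlt : C ∩ Iic α ⊆ C ∩ Iio s := fun x hx =>
    ⟨hx.1, (le_csSup hbdd hx).lt_of_ne fun h => hs (h ▸ hx.1 :)⟩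
  have hsup : sSup (C ∩ Iio s) = s :=
    le_antisymm (csSup_le' fun x hx => hx.2.le) (csSup_le_csSup ⟨s, fun x hx => hx.2.le⟩
      ⟨γ, hγ, hγα⟩ hlt)
  refine hs (hC.2.1 s ((csSup_le' fun x hx => hx.2).trans_lt hα) ?_ hsup)
  exact (hlt ⟨hγ, hγα⟩).2.ne_bot

theorem mem_Ico_nxt_sSup (hC : IsClubIn C l) {ξ : Ordinal} (hξ : ξ < l) :
    ξ ∈ Ico (sSup (C ∩ Iic ξ)) (nxt C (sSup (C ∩ Iic ξ))) := by
  have hle : sSup (C ∩ Iic ξ) ≤ ξ := csSup_le' fun x hx => hx.2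
  refine ⟨hle, not_le.1 fun h => ?_⟩
  have h1 := nxt_mem_lt hC (hle.trans_lt hξ)
  exact h1.2.not_ge (le_csSup ⟨ξ, fun x hx => hx.2⟩ ⟨h1.1, h⟩)

end

theorem forall_exists_inter_mem_iff_exists_ufSum {l : Ordinal.{u}} (p q : Q0 l) {α γ : Ordinal}
    (hα : α ∈ q.C) (hγ : γ ∈ p.C) (hγα : γ ≤ α) :
    (∀ A ∈ q.d α, ∃ β ∈ p.C, A ∩ Ico β (nxt p.C β) ∈ p.d β) ↔
      ∃ e : Set (Set Ordinal),
        IsUltraOn (Ico (sSup (p.C ∩ Iic α)) (sInf (p.C ∩ Ici (nxt q.C α))) ∩ p.C) e ∧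
        q.d α = {B | ∃ A ∈ ufSum
            (Ico (sSup (p.C ∩ Iic α)) (sInf (p.C ∩ Ici (nxt q.C α))) ∩ p.C) e
            (fun x => Ico x (nxt p.C x)) p.d,
          B = A ∩ Ico α (nxt q.C α)} := by
  set X := Ico (sSup (p.C ∩ Iic α)) (sInf (p.C ∩ Ici (nxt q.C α))) ∩ p.C
  set Zq := Ico α (nxt q.C α)
  set π : Ordinal → Ordinal := fun ξ => sSup (p.C ∩ Iic ξ)
  have hqα := q.ultra α hα
  have hαl : α < l := q.club.1 hα
  have hnxt : nxt q.C α < l := nxt_lt q.club hαl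
  have hπC : ∀ ξ ∈ Zq, π ξ ∈ p.C := fun ξ hξ =>
    sSup_inter_Iic_mem p.club hγ (hγα.trans hξ.1) (hξ.2.trans hnxt)
  have hπZ : ∀ ξ ∈ Zq, ξ ∈ Ico (π ξ) (nxt p.C (π ξ)) := fun ξ hξ =>
    mem_Ico_nxt_sSup p.club (hξ.2.trans hnxt)
  have hπX : MapsTo π Zq X := fun ξ hξ => by
    refine ⟨⟨?_, (hπZ ξ hξ).1.trans_lt (hξ.2.trans_le (sInf_Ici_mem_le p.club hnxt).2)⟩, hπC ξ hξ⟩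
    exact le_of_mem_Ico_nxt (sSup_inter_Iic_mem p.club hγ hγα hαl) (hπZ ξ hξ)
      ((csSup_le' fun x hx => hx.2).trans hξ.1)
  have hZqX : Zq ⊆ ⋃ β ∈ X, Ico β (nxt p.C β) := fun ξ hξ => mem_biUnion (hπX hξ) (hπZ ξ hξ)
  have trace_iff {e} (he : IsUltraOn X e) :=
    IsUltraOn.eq_trace_iff_subset (isUltraOn_ufSum he fun x hx => p.ultra x hx.2) hqα hZqX
  constructor
  · intro hb
    refine ⟨_, hqα.map hπX, (trace_iff (hqα.map hπX)).2 fun A hA =>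
      ⟨(hqα.subset_of_mem hA).trans hZqX, fun x hx => hx.1, ?_⟩⟩
    refine (hqα.inter_mem_or_diff_mem _).resolve_right fun hc => ?_
    obtain ⟨β, hβ, hβA⟩ := hb _ (hqα.inter_mem hA hc)
    obtain ⟨ξ, ⟨hξA, hξZq, hξG⟩, hξβ⟩ := (p.ultra β hβ).nonempty_of_mem hβA
    obtain rfl : π ξ = β := eq_of_mem_Ico_nxt (hπC ξ hξZq) hβ (hπZ ξ hξZq) hξβ
    exact hξG ⟨hπX hξZq, (p.ultra _ hβ).mem_of_superset hβA (fun ζ hζ => ⟨hζ.2, hζ.1.1⟩)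
      inter_subset_left⟩
  · rintro ⟨e, he, heq⟩ A hA
    obtain ⟨β, hβX, hβA⟩ := exists_of_mem_ufSum he ((trace_iff he).1 heq hA)
    exact ⟨β, hβX.2, by rwa [inter_comm]⟩

theorem le0_of_eventually_exists_inter_mem {l : Ordinal.{u}} (p q : Q0 l)
    (hb : ∃ ε, ε < l ∧ ∀ α ∈ q.C, ε ≤ α → ∀ A ∈ q.d α,
      ∃ β ∈ p.C, A ∩ Ico β (nxt p.C β) ∈ p.d β) :
    le0 l p q := by
  obtain ⟨εb, hεb, hb⟩ := hb
  rintro A ⟨hAl, εA, hεA, hA⟩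
  obtain ⟨γ, hγ, hεγ⟩ := p.club.2.2 εA hεA
  refine ⟨hAl, max εb γ, max_lt hεb (p.club.1 hγ), fun α hα hαε => ?_⟩
  refine ((q.ultra α hα).inter_mem_or_diff_mem A).resolve_right fun hc => ?_
  obtain ⟨β, hβ, hβA⟩ := hb α hα ((le_max_left _ _).trans hαε) _ hc
  obtain ⟨ξ, ⟨hξZq, -⟩, hξβ⟩ := (p.ultra β hβ).nonempty_of_mem hβA
  have hγβ : γ ≤ β := le_of_mem_Ico_nxt hγ hξβ (((le_max_right _ _).trans hαε).trans hξZq.1)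
  obtain ⟨ζ, ⟨⟨-, hζA⟩, -⟩, hζA', -⟩ :=
    (p.ultra β hβ).inter_nonempty hβA (hA β hβ (hεγ.le.trans hγβ))
  exact hζA hζA'

theorem exists_closure_point {κ : Cardinal.{u}} (hreg : κ.IsRegular) (hunc : ℵ₀ < κ)
    {g : Ordinal.{u} → Ordinal.{u}} (hg : ∀ ξ < κ.ord, g ξ < κ.ord) {ε : Ordinal} (hε : ε < κ.ord) :
    ∃ δ, ε ≤ δ ∧ δ < κ.ord ∧ ∀ ξ < δ, g ξ < δ := by
  set F : Ordinal.{u} → Ordinal.{u} := fun x => ⨆ ξ : Iio x, g ξ + 1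
  have hF : ∀ x < κ.ord, F x < κ.ord := fun x hx => by
    refine Ordinal.lift_iSup_add_one_lt_of_lt_cof ?_ fun ξ => hg ξ (ξ.2.trans hx)
    rw [Cardinal.mk_Iio_ordinal, Cardinal.lift_lift, ← Ordinal.lift_cof, hreg.cof_ord,
      Cardinal.lift_lt]
    exact Cardinal.lt_ord.1 hx
  refine ⟨Ordinal.nfp F ε, Ordinal.le_nfp F ε, Ordinal.nfp_lt_ord (by rwa [hreg.cof_ord]) hF hε,
    fun ξ hξ => ?_⟩
  obtain ⟨n, hn⟩ := Ordinal.lt_nfp_iff.1 hξ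
  calc g ξ < g ξ + 1 := Order.lt_add_one_iff.2 le_rfl
    _ ≤ F (F^[n] ε) := Ordinal.le_iSup (fun ζ : Iio (F^[n] ε) => g ζ + 1) ⟨ξ, hn⟩
    _ ≤ Ordinal.nfp F ε := by
      rw [← Function.iterate_succ_apply' F n ε]
      exact Ordinal.iterate_le_nfp F ε (n + 1)

theorem exists_sparse_cofinal_subset {κ : Cardinal.{u}} (hreg : κ.IsRegular) (hunc : ℵ₀ < κ)
    {T : Set Ordinal.{u}} (hT : ∀ ε < κ.ord, ∃ α ∈ T, ε ≤ α) {h : Ordinal.{u} → Ordinal.{u}}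
    (hh : ∀ α ∈ T, h α < κ.ord) :
    ∃ S ⊆ T, (∀ ε < κ.ord, ∃ α ∈ S, ε ≤ α) ∧ ∀ α ∈ S, ∀ α' ∈ S, α < α' → h α < α' := by
  set a : Ordinal → Ordinal := fun ξ => sInf (T ∩ Ici ξ)
  have ha : ∀ ξ < κ.ord, a ξ ∈ T ∧ ξ ≤ a ξ := fun ξ hξ => csInf_mem (hT ξ hξ)
  have ha_mono : ∀ ξ ξ', ξ ≤ ξ' → ξ' < κ.ord → a ξ ≤ a ξ' := fun ξ ξ' hle hξ' =>
    csInf_le_csInf (OrderBot.bddBelow _) (hT ξ' hξ') fun x hx => ⟨hx.1, hle.trans hx.2⟩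
  refine ⟨{α | ∃ δ < κ.ord, (∀ ξ < δ, h (a ξ) < δ) ∧ a δ = α}, ?_, fun ε hε => ?_, ?_⟩
  · rintro _ ⟨δ, hδ, -, rfl⟩
    exact (ha δ hδ).1
  · obtain ⟨δ, hεδ, hδ, hcl⟩ := exists_closure_point hreg hunc
      (fun ξ hξ => hh _ (ha ξ hξ).1) hε
    exact ⟨a δ, ⟨δ, hδ, hcl, rfl⟩, hεδ.trans (ha δ hδ).2⟩
  · rintro _ ⟨δ, hδ, -, rfl⟩ _ ⟨δ', hδ', hcl', rfl⟩ hlt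
    have hδδ' : δ < δ' := not_le.1 fun hle => (ha_mono δ' δ hle hδ).not_gt hlt
    exact (hcl' δ hδδ').trans_le (ha δ' hδ').2

theorem not_le0_of_sparse {l : Ordinal.{u}} (hl : 0 < l) (p q : Q0 l) {S : Set Ordinal}
    (hSq : S ⊆ q.C) (hS : ∀ ε < l, ∃ α ∈ S, ε ≤ α)
    (hsparse : ∀ α ∈ S, ∀ α' ∈ S, α < α' → sInf (p.C ∩ Ici (nxt q.C α)) < α')
    {bad : Ordinal → Set Ordinal} (hbad : ∀ α ∈ S, bad α ∈ q.d α)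
    (hbad_p : ∀ α ∈ S, ∀ β ∈ p.C, bad α ∩ Ico β (nxt p.C β) ∉ p.d β) :
    ¬ le0 l p q := by
  intro hle
  set B := Iio l \ ⋃ α ∈ S, bad α
  have hmeet_lt : ∀ β ∈ p.C, ∀ α ∈ S, ∀ α' ∈ S, α < α' → (bad α ∩ Ico β (nxt p.C β)).Nonempty →
      (bad α' ∩ Ico β (nxt p.C β)).Nonempty → False := by
    rintro β hβ α hα α' hα' hlt ⟨ξ, hξ, hξβ⟩ ⟨ξ', hξ', hξ'β⟩
    have hξq := (q.ultra α (hSq hα)).subset_of_mem (hbad α hα) hξ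
    have hβ₁ := sInf_Ici_mem_le p.club (nxt_lt q.club (q.club.1 (hSq hα)))
    have hnxt : nxt p.C β ≤ sInf (p.C ∩ Ici (nxt q.C α)) :=
      nxt_le hβ₁.1 (hξβ.1.trans_lt (hξq.2.trans_le hβ₁.2))
    have hα'ξ' := ((q.ultra α' (hSq hα')).subset_of_mem (hbad α' hα') hξ').1
    exact (hξ'β.2.trans_le (hnxt.trans (hsparse α hα α' hα' hlt).le)).not_ge hα'ξ'
  have hBp : B ∈ fil l p := by
    refine ⟨sdiff_subset, 0, hl, fun β hβ _ => ?_⟩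
    obtain ⟨α₀, hα₀, huniq⟩ : ∃ α₀ ∈ S, ∀ α ∈ S,
        (bad α ∩ Ico β (nxt p.C β)).Nonempty → α = α₀ := by
      by_cases hex : ∃ α₀ ∈ S, (bad α₀ ∩ Ico β (nxt p.C β)).Nonempty
      · obtain ⟨α₀, hα₀, hne₀⟩ := hex
        refine ⟨α₀, hα₀, fun α hα hne => ?_⟩
        rcases lt_trichotomy α α₀ with h | h | h
        · exact (hmeet_lt β hβ α hα α₀ hα₀ h hne hne₀).elim
        · exact h
        · exact (hmeet_lt β hβ α₀ hα₀ α hα h hne₀ hne).elim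
      · obtain ⟨α₀, hα₀, -⟩ := hS 0 hl
        exact ⟨α₀, hα₀, fun α hα hne => (hex ⟨α, hα, hne⟩).elim⟩
    have hpβ := p.ultra β hβ
    refine hpβ.mem_of_superset ((hpβ.inter_mem_or_diff_mem _).resolve_left (hbad_p α₀ hα₀ β hβ))
      (fun ξ hξ => ⟨⟨hξ.1.2.trans (nxt_lt p.club (p.club.1 hβ)), ?_⟩, hξ.1⟩) inter_subset_right
    simp only [mem_iUnion, not_exists]
    exact fun α hα hξα => hξ.2 (huniq α hα ⟨ξ, hξα, hξ.1⟩ ▸ hξα)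
  obtain ⟨-, ε, hε, hBq⟩ := hle hBp
  obtain ⟨α, hαS, hεα⟩ := hS ε hε
  obtain ⟨ξ, ⟨⟨-, hξB⟩, -⟩, hξbad⟩ :=
    (q.ultra α (hSq hαS)).inter_nonempty (hBq α (hSq hαS) hεα) (hbad α hαS)
  exact hξB (mem_biUnion hαS hξbad)

theorem eventually_exists_inter_mem_of_le0 {κ : Cardinal.{u}} (hreg : κ.IsRegular)
    (hunc : ℵ₀ < κ) (p q : Q0 κ.ord) (hle : le0 κ.ord p q) :
    ∃ ε, ε < κ.ord ∧ ∀ α ∈ q.C, ε ≤ α → ∀ A ∈ q.d α,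
      ∃ β ∈ p.C, A ∩ Ico β (nxt p.C β) ∈ p.d β := by
  by_contra hb
  push Not at hb
  obtain ⟨S, hST, hS, hsparse⟩ := exists_sparse_cofinal_subset hreg hunc
    (T := {α | α ∈ q.C ∧ ∃ A ∈ q.d α, ∀ β ∈ p.C, A ∩ Ico β (nxt p.C β) ∉ p.d β})
    (fun ε hε => by
      obtain ⟨α, hα, hεα, hA⟩ := hb ε hε
      exact ⟨α, ⟨hα, hA⟩, hεα⟩)
    (h := fun α => sInf (p.C ∩ Ici (nxt q.C α)))
    fun α hα => p.club.1 (sInf_Ici_mem_le p.club (nxt_lt q.club (q.club.1 hα.1))).1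
  choose! bad hbad hbad_p using fun α (hα : α ∈ S) => (hST hα).2
  exact not_le0_of_sparse (Cardinal.ord_pos.2 (aleph0_pos.trans hunc)) p q
    (fun α hα => (hST hα).1) hS hsparse hbad hbad_p hle

theorem exists_lt_forall_ge_congr {l γ : Ordinal} (hγ : γ < l) {C : Set Ordinal}
    {P Q : Ordinal → Prop} (h : ∀ α ∈ C, γ ≤ α → (P α ↔ Q α)) :
    (∃ ε, ε < l ∧ ∀ α ∈ C, ε ≤ α → P α) ↔ (∃ ε, ε < l ∧ ∀ α ∈ C, ε ≤ α → Q α) := by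
  constructor <;> rintro ⟨ε, hε, hPQ⟩ <;> refine ⟨max ε γ, max_lt hε hγ, fun α hα hle => ?_⟩
  · exact (h α hα ((le_max_right _ _).trans hle)).1 (hPQ α hα ((le_max_left _ _).trans hle))
  · exact (h α hα ((le_max_right _ _).trans hle)).2 (hPQ α hα ((le_max_left _ _).trans hle))

/-- Proposition "tfcae": for `p, q ∈ Q⁰_λ` the conditions (a) `p ≤⁰ q`;
(b) eventual witnessing of `d^q_α` inside `p`; and (c) eventual representation of
`d^q_α` as a sum of the `d^p_β` along an ultrafilter, are equivalent. -/
theorem stmt10 (κ : Cardinal) (hreg : κ.IsRegular) (hunc : ℵ₀ < κ)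
    (p q : Q0 κ.ord) :
    (le0 κ.ord p q ↔
      (∃ ε, ε < κ.ord ∧ ∀ α ∈ q.C, ε ≤ α → ∀ A ∈ q.d α,
        ∃ β ∈ p.C, A ∩ Ico β (nxt p.C β) ∈ p.d β)) ∧
    ((∃ ε, ε < κ.ord ∧ ∀ α ∈ q.C, ε ≤ α → ∀ A ∈ q.d α,
        ∃ β ∈ p.C, A ∩ Ico β (nxt p.C β) ∈ p.d β) ↔
      (∃ ε, ε < κ.ord ∧ ∀ α ∈ q.C, ε ≤ α →
        ∃ e : Set (Set Ordinal),
          IsUltraOn (Ico (sSup (p.C ∩ Iic α)) (sInf (p.C ∩ Ici (nxt q.C α))) ∩ p.C) e ∧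
          q.d α = {B | ∃ A ∈ ufSum
              (Ico (sSup (p.C ∩ Iic α)) (sInf (p.C ∩ Ici (nxt q.C α))) ∩ p.C) e
              (fun x => Ico x (nxt p.C x)) p.d,
            B = A ∩ Ico α (nxt q.C α)})) := by
  obtain ⟨γ, hγ, -⟩ := p.club.2.2 0 (Cardinal.ord_pos.2 (aleph0_pos.trans hunc))
  refine ⟨⟨eventually_exists_inter_mem_of_le0 hreg hunc p q,
    le0_of_eventually_exists_inter_mem p q⟩, ?_⟩
  exact exists_lt_forall_ge_congr (p.club.1 hγ) fun α hα hγα =>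
    forall_exists_inter_mem_iff_exists_ufSum p q hα hγ hγα

end Sh830

end
end

section
/- Assume θ < λ = cf(λ) < 2^θ, with λ uncountable. Then cov(M^λ_{λ,λ}) = λ⁺. -/
open Set Ordinal Cardinal

noncomputable section

namespace Sh830

/-! Upper bound: since `κ < 2 ^ θ`, there are `κ⁺` binary patterns of length `θ`. A function
`f : κ → κ` has only `κ` windows `[δ, δ + θ)`, so it omits one of these patterns, and for a
fixed pattern the functions omitting it form a nowhere dense set (any basic open set can be
shrunk by writing the pattern into it).

Lower bound: `κ` nowhere dense sets never cover `^κκ`. Build a `κ`-sequence of increasingly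
long initial segments, the `i`-th one having no extension in the `i`-th nowhere dense set;
regularity of `κ` makes the union of fewer than `κ` of them again an initial segment of
length `< κ`. -/

lemma inMIdeal_of_isNwd {l : Ordinal} (hl : 1 < l) {A : Set (Ordinal → Ordinal)}
    (hA : IsNwd l A) : InMIdeal l A :=
  ⟨hA.1, 1, hl, fun _ => A, fun _ _ => hA, fun _ hx => mem_biUnion (mem_Iio.2 zero_lt_one) hx⟩

section Patterns

universe u

def patternFree (l b : Ordinal) (η : Ordinal → Ordinal) : Set (Ordinal → Ordinal) :=
  {f | f ∈ funSp l ∧ ¬ ∃ δ, δ < l ∧ ∀ i, i < b → f (δ + i) = η i}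

lemma isNwd_patternFree {κ : Cardinal} (hκ : ℵ₀ ≤ κ) {b : Ordinal} (hb : b.card < κ)
    {η : Ordinal → Ordinal} (hη : η ∈ funSp κ.ord) : IsNwd κ.ord (patternFree κ.ord b η) := by
  refine ⟨fun f hf => hf.1, fun s hs α hα => ?_⟩
  have hαb : α + b < κ.ord := by
    rw [lt_ord, card_add]
    exact add_lt_of_lt hκ (lt_ord.1 hα) hb
  refine ⟨fun β => if β < α then s β else η (β - α), fun β hβ => ?_, α + b, le_self_add, hαb,
    fun β hβ => if_pos hβ, fun f _ hft hf => hf.2 ⟨α, hα, fun i hi => ?_⟩⟩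
  · dsimp only
    split_ifs
    · exact hs β hβ
    · exact hη _ ((Ordinal.sub_le_self β α).trans_lt hβ)
  · rw [hft (α + i) ((add_lt_add_iff_left α).2 hi)]
    dsimp only
    rw [if_neg (not_lt.2 le_self_add), Ordinal.add_sub_cancel]

/-- Pigeonhole: `f` has only `#λ` blocks `[δ, δ + b)`. -/
lemma exists_mem_patternFree {l b : Ordinal.{u}} {P : Set (Ordinal.{u} → Ordinal.{u})}
    (hP : ∀ η ∈ P, ∀ η' ∈ P, (∀ i, i < b → η i = η' i) → η = η')
    (hcard : #(Iio l) < #P) {f : Ordinal → Ordinal} (hf : f ∈ funSp l) :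
    ∃ η ∈ P, f ∈ patternFree l b η := by
  by_contra! h
  have hocc : ∀ η : P, ∃ δ, δ < l ∧ ∀ i, i < b → f (δ + i) = (η : Ordinal → Ordinal) i := by
    intro η
    simpa [patternFree, hf] using h η η.2
  choose δ hδl hδ using hocc
  have hinj : Function.Injective fun η : P => (⟨δ η, hδl η⟩ : Iio l) := by
    intro η η' hηη'
    have hδη : δ η = δ η' := congrArg Subtype.val hηη'
    refine Subtype.ext (hP _ η.2 _ η'.2 fun i hi => ?_)
    rw [← hδ η i hi, ← hδ η' i hi, hδη]
  exact (mk_le_of_injective hinj).not_gt hcard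

def binaryPatterns (b : Ordinal) : Set (Ordinal → Ordinal) :=
  (fun X : Set Ordinal => X.indicator 1) '' 𝒫 (Iio b)

lemma binaryPatterns_subset_funSp {l : Ordinal} (hl : 1 < l) (b : Ordinal) :
    binaryPatterns b ⊆ funSp l := by
  rintro _ ⟨X, -, rfl⟩ β -
  by_cases hβ : β ∈ X
  · simpa [hβ] using hl
  · simpa [hβ] using zero_lt_one.trans hl

lemma eq_of_mem_binaryPatterns {b : Ordinal} {η η' : Ordinal → Ordinal}
    (hη : η ∈ binaryPatterns b) (hη' : η' ∈ binaryPatterns b)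
    (h : ∀ i, i < b → η i = η' i) : η = η' := by
  obtain ⟨X, hX, rfl⟩ := hη
  obtain ⟨X', hX', rfl⟩ := hη'
  funext i
  by_cases hi : i < b
  · exact h i hi
  · simp only [indicator_of_notMem (fun h => hi (hX h)), indicator_of_notMem (fun h => hi (hX' h))]

lemma mk_binaryPatterns (b : Ordinal.{u}) : #(binaryPatterns b) = 2 ^ #(Iio b) := by
  rw [binaryPatterns, mk_image_eq fun X Y h => indicator_one_inj Ordinal h, mk_powerset]

lemma exists_cover_mk_le_succ {θ κ : Cardinal} (hκ : ℵ₀ ≤ κ) (hθ : θ < κ) (hlt : κ < 2 ^ θ) :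
    ∃ S : Set (Set (Ordinal → Ordinal)), (∀ A ∈ S, InMIdeal κ.ord A) ∧
      funSp κ.ord ⊆ ⋃₀ S ∧ #S ≤ Cardinal.lift.{1,0} (Order.succ κ) := by
  have hl : 1 < κ.ord := one_lt_of_isSuccLimit (isSuccLimit_ord hκ)
  have hsucc : Cardinal.lift.{1,0} (Order.succ κ) ≤ #(binaryPatterns θ.ord) := by
    have h2 : Cardinal.lift.{1,0} (2 ^ θ) = 2 ^ Cardinal.lift.{1,0} θ := by
      rw [lift_power, Cardinal.lift_ofNat]
    rw [mk_binaryPatterns, Cardinal.mk_Iio_ordinal, card_ord, ← h2]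
    exact lift_le.2 (Order.succ_le_of_lt hlt)
  obtain ⟨P, hPsub, hPcard⟩ := le_mk_iff_exists_subset.1 hsucc
  refine ⟨patternFree κ.ord θ.ord '' P, ?_, fun f hf => ?_, mk_image_le.trans hPcard.le⟩
  · rintro _ ⟨η, hη, rfl⟩
    exact inMIdeal_of_isNwd hl (isNwd_patternFree hκ (by rwa [card_ord])
      (binaryPatterns_subset_funSp hl _ (hPsub hη)))
  · have hcard : #(Iio κ.ord) < #P := by
      rw [hPcard, Cardinal.mk_Iio_ordinal, card_ord]
      exact lift_lt.2 (Order.lt_succ κ)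
    obtain ⟨η, hη, hfη⟩ := exists_mem_patternFree
      (fun η hη η' hη' => eq_of_mem_binaryPatterns (hPsub hη) (hPsub hη')) hcard hf
    exact ⟨_, mem_image_of_mem _ hη, hfη⟩

end Patterns

section Baire

/-- Stands for the basic open set `O_{fn ↾ len}`: values of `fn` from `len` on are irrelevant. -/
structure Approx where
  fn : Ordinal.{0} → Ordinal.{0}
  len : Ordinal.{0}

namespace Approx

instance : Preorder Approx where
  le c d := c.len ≤ d.len ∧ ∀ β, β < c.len → d.fn β = c.fn β
  le_refl c := ⟨le_rfl, fun _ _ => rfl⟩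
  le_trans c d e hcd hde :=
    ⟨hcd.1.trans hde.1, fun β hβ => (hde.2 β (hβ.trans_le hcd.1)).trans (hcd.2 β hβ)⟩

def IsValid (l : Ordinal) (c : Approx) : Prop := c.fn ∈ funSp l ∧ c.len < l

def Avoids (l : Ordinal) (A : Set (Ordinal → Ordinal)) (c : Approx) : Prop :=
  ∀ f ∈ funSp l, (∀ β, β < c.len → f β = c.fn β) → f ∉ A

lemma fn_eq_of_le_or_le {c d : Approx} (h : c ≤ d ∨ d ≤ c) {β : Ordinal}
    (hc : β < c.len) (hd : β < d.len) : c.fn β = d.fn β := by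
  rcases h with h | h
  · exact (h.2 β hc).symm
  · exact h.2 β hd

lemma exists_le_avoids {l : Ordinal} {A : Set (Ordinal → Ordinal)} (hA : IsNwd l A)
    {c : Approx} (hc : c.IsValid l) : ∃ d, c ≤ d ∧ d.IsValid l ∧ d.Avoids l A := by
  obtain ⟨t, ht, α, hα, hαl, hts, havoid⟩ := hA.2 c.fn hc.1 c.len hc.2
  exact ⟨⟨t, α⟩, ⟨hα, hts⟩, ⟨ht, hαl⟩, havoid⟩

lemma exists_upperBound {κ : Cardinal.{0}} (hreg : κ.IsRegular) {i : Ordinal} (hi : i < κ.ord)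
    {p : Ordinal → Approx} (hp : ∀ j, j < i → (p j).IsValid κ.ord)
    (hchain : ∀ j j', j ≤ j' → j' < i → p j ≤ p j') :
    ∃ c : Approx, c.IsValid κ.ord ∧ i ≤ c.len ∧ ∀ j, j < i → p j ≤ c := by
  classical
  let fn : Ordinal → Ordinal := fun β =>
    if h : ∃ j, j < i ∧ β < (p j).len then (p h.choose).fn β else 0
  have hfn : ∀ j, j < i → ∀ β, β < (p j).len → fn β = (p j).fn β := by
    intro j hj β hβ
    have h : ∃ j, j < i ∧ β < (p j).len := ⟨j, hj, hβ⟩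
    simp only [fn, dif_pos h]
    exact fn_eq_of_le_or_le ((le_total _ _).imp (hchain _ _ · hj) (hchain _ _ · h.choose_spec.1))
      h.choose_spec.2 hβ
  have hsup : ⨆ j : Iio i, (p j).len < κ.ord := by
    refine Ordinal.lift_iSup_lt_of_lt_cof ?_ fun j : Iio i => (hp j j.2).2
    rwa [Cardinal.mk_Iio_ordinal, ← Ordinal.lift_cof, hreg.cof_ord, Cardinal.lift_lift,
      Cardinal.lift_lt, ← lt_ord]
  refine ⟨⟨fn, max i (⨆ j : Iio i, (p j).len)⟩, ⟨fun β hβ => ?_, max_lt hi hsup⟩, le_max_left _ _,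
    fun j hj => ⟨?_, hfn j hj⟩⟩
  · by_cases h : ∃ j, j < i ∧ β < (p j).len
    · show fn β < κ.ord
      rw [hfn _ h.choose_spec.1 β h.choose_spec.2]
      exact (hp _ h.choose_spec.1).1 β hβ
    · simpa [fn, h] using pos_of_gt hi
  · exact (Ordinal.le_iSup (fun j : Iio i => (p j).len) ⟨j, hj⟩).trans (le_max_right _ _)

end Approx

def IsApproxStep (l : Ordinal) (W : Ordinal → Set (Ordinal → Ordinal)) (i : Ordinal)
    (prev : (j : Ordinal) → j < i → Approx) (c : Approx) : Prop :=
  c.IsValid l ∧ i ≤ c.len ∧ (∀ j (hj : j < i), prev j hj ≤ c) ∧ c.Avoids l (W i)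

open Classical in
def approxSeq (l : Ordinal) (W : Ordinal → Set (Ordinal → Ordinal)) : Ordinal → Approx :=
  Ordinal.lt_wf.fix fun i prev =>
    if h : ∃ c, IsApproxStep l W i prev c then h.choose else ⟨fun _ => 0, 0⟩

open Classical in
lemma approxSeq_eq (l : Ordinal) (W : Ordinal → Set (Ordinal → Ordinal)) (i : Ordinal) :
    approxSeq l W i = if h : ∃ c, IsApproxStep l W i (fun j _ => approxSeq l W j) c
      then h.choose else ⟨fun _ => 0, 0⟩ :=
  Ordinal.lt_wf.fix_eq _ _

lemma approxSeq_spec {κ : Cardinal.{0}} (hreg : κ.IsRegular)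
    {W : Ordinal → Set (Ordinal → Ordinal)} (hW : ∀ i, i < κ.ord → IsNwd κ.ord (W i))
    {i : Ordinal} (hi : i < κ.ord) :
    IsApproxStep κ.ord W i (fun j _ => approxSeq κ.ord W j) (approxSeq κ.ord W i) := by
  induction i using WellFoundedLT.induction with
  | _ i IH =>
  have hchain : ∀ j j', j ≤ j' → j' < i → approxSeq κ.ord W j ≤ approxSeq κ.ord W j' := by
    intro j j' hjj' hj'
    rcases hjj'.lt_or_eq with hjj' | rfl
    · exact (IH j' hj' (hj'.trans hi)).2.2.1 j hjj'
    · exact le_rfl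
  obtain ⟨c, hc, hic, hlec⟩ := Approx.exists_upperBound hreg hi
    (fun j hj => (IH j hj (hj.trans hi)).1) hchain
  obtain ⟨d, hcd, hd, hdW⟩ := Approx.exists_le_avoids (hW i hi) hc
  have hex : ∃ d, IsApproxStep κ.ord W i (fun j _ => approxSeq κ.ord W j) d :=
    ⟨d, hd, hic.trans hcd.1, fun j hj => (hlec j hj).trans hcd, hdW⟩
  rw [approxSeq_eq, dif_pos hex]
  exact hex.choose_spec

lemma exists_forall_notMem {κ : Cardinal.{0}} (hreg : κ.IsRegular)
    {W : Ordinal → Set (Ordinal → Ordinal)} (hW : ∀ i, i < κ.ord → IsNwd κ.ord (W i)) :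
    ∃ f ∈ funSp κ.ord, ∀ i, i < κ.ord → f ∉ W i := by
  have hl : Order.IsSuccLimit κ.ord := isSuccLimit_ord hreg.aleph0_le
  set g := approxSeq κ.ord W
  have hspec := fun {i} (hi : i < κ.ord) => approxSeq_spec hreg hW hi
  have hle : ∀ j j', j < κ.ord → j' < κ.ord → g j ≤ g j' ∨ g j' ≤ g j := by
    intro j j' hj hj'
    rcases lt_trichotomy j j' with h | rfl | h
    · exact .inl ((hspec hj').2.2.1 j h)
    · exact .inl le_rfl
    · exact .inr ((hspec hj).2.2.1 j' h)
  have hlen : ∀ β, β < κ.ord → β < (g (β + 1)).len := fun β hβ =>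
    (Order.lt_add_one_iff.2 le_rfl).trans_le (hspec (hl.add_one_lt hβ)).2.1
  have hf : (fun β => (g (β + 1)).fn β) ∈ funSp κ.ord := fun β hβ =>
    (hspec (hl.add_one_lt hβ)).1.1 β hβ
  refine ⟨_, hf, fun i hi => (hspec hi).2.2.2 _ hf fun β hβ => ?_⟩
  have hβ' := hβ.trans (hspec hi).1.2
  exact Approx.fn_eq_of_le_or_le (hle _ _ (hl.add_one_lt hβ') hi) (hlen β hβ') hβ

lemma exists_forall_notMem_of_mk_le {κ : Cardinal.{0}} (hreg : κ.IsRegular)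
    {T : Set (Set (Ordinal → Ordinal))} (hT : ∀ X ∈ T, IsNwd κ.ord X)
    (hcard : #T ≤ Cardinal.lift.{1,0} κ) : ∃ f ∈ funSp κ.ord, ∀ X ∈ T, f ∉ X := by
  rcases T.eq_empty_or_nonempty with rfl | hne
  · exact ⟨fun _ => 0, fun _ _ => (isSuccLimit_ord hreg.aleph0_le).bot_lt, fun _ h => h.elim⟩
  have : Nonempty T := hne.to_subtype
  rw [← card_ord κ, ← Cardinal.mk_Iio_ordinal] at hcard
  obtain ⟨e⟩ := hcard
  let σ : Iio κ.ord → T := Function.invFun e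
  have hσ : Function.Surjective σ := Function.invFun_surjective e.injective
  let W : Ordinal → Set (Ordinal → Ordinal) := fun i => if h : i < κ.ord then σ ⟨i, h⟩ else ∅
  obtain ⟨f, hf, hfW⟩ := exists_forall_notMem hreg (W := W) fun i hi => by
    simpa only [W, dif_pos hi] using hT _ (σ ⟨i, hi⟩).2
  refine ⟨f, hf, fun X hX hfX => ?_⟩
  obtain ⟨⟨i, hi⟩, hiX⟩ := hσ ⟨X, hX⟩
  have hWi : W i = X := by simp only [W, hiX, dif_pos (mem_Iio.1 hi)]
  exact hfW i hi (hWi ▸ hfX)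

lemma lift_lt_mk_of_cover {κ : Cardinal.{0}} (hreg : κ.IsRegular)
    {S : Set (Set (Ordinal → Ordinal))} (hS : ∀ A ∈ S, InMIdeal κ.ord A)
    (hcov : funSp κ.ord ⊆ ⋃₀ S) : Cardinal.lift.{1,0} κ < #S := by
  by_contra! hle
  choose θ hθ B hB hAB using fun A : S => (hS A A.2).2
  let T := (fun q : S × Iio κ.ord => B q.1 q.2) '' {q | (q.2 : Ordinal) < θ q.1}
  have hinf : ℵ₀ ≤ Cardinal.lift.{1,0} κ := by simpa using hreg.aleph0_le
  have hTcard : #T ≤ Cardinal.lift.{1,0} κ := calc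
    #T ≤ #(S × Iio κ.ord) := mk_image_le.trans (mk_set_le _)
    _ = #S * Cardinal.lift.{1,0} κ := by
      rw [mk_prod, Cardinal.lift_id, Cardinal.lift_id, Cardinal.mk_Iio_ordinal, card_ord]
    _ ≤ Cardinal.lift.{1,0} κ * Cardinal.lift.{1,0} κ := mul_le_mul_left hle _
    _ = Cardinal.lift.{1,0} κ := mul_eq_self hinf
  obtain ⟨f, hf, hfT⟩ := exists_forall_notMem_of_mk_le hreg (T := T)
    (by rintro _ ⟨q, hq, rfl⟩; exact hB q.1 q.2 hq) hTcard
  obtain ⟨A, hA, hfA⟩ := hcov hf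
  obtain ⟨i, hi, hfi⟩ := mem_iUnion₂.1 (hAB ⟨A, hA⟩ hfA)
  exact hfT _ ⟨(⟨A, hA⟩, ⟨i, hi.trans (hθ _)⟩), hi, rfl⟩ hfi

end Baire

theorem stmt16_general (θ κ : Cardinal) (hreg : κ.IsRegular)
    (hθ : θ < κ) (hlt : κ < 2 ^ θ) :
    covM κ.ord = Cardinal.lift.{1,0} (Order.succ κ) := by
  obtain ⟨S, hS, hcov, hcard⟩ := exists_cover_mk_le_succ hreg.aleph0_le hθ hlt
  apply le_antisymm
  · exact (csInf_le' ⟨S, hS, hcov, rfl⟩ : covM κ.ord ≤ #S).trans hcard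
  refine le_csInf ⟨_, S, hS, hcov, rfl⟩ ?_
  rintro _ ⟨S', hS', hcov', rfl⟩
  rw [Cardinal.lift_succ]
  exact Order.succ_le_of_lt (lift_lt_mk_of_cover hreg hS' hcov')

/-- If `θ < λ = cf(λ) < 2^θ` (with `λ` uncountable), then `cov(M^λ_{λ,λ}) = λ⁺`. -/
theorem stmt16 (θ κ : Cardinal) (hunc : ℵ₀ < κ) (hreg : κ.IsRegular)
    (hθ : θ < κ) (hlt : κ < 2 ^ θ) :
    covM κ.ord = Cardinal.lift.{1,0} (Order.succ κ) :=
  stmt16_general θ κ hreg hθ hlt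

end Sh830

end
end
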